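/- Let k ≥ 2 and ℓ ≥ 1 be integers, let i ∈ {0,…,k−1}, and let S_i^k be the set of vertices of ST_k^ℓ whose entry in position 0 equals i. For every vertex v not in S_i^k, the subgraph of ST_k^ℓ induced on {v} ∪ (N(v) ∩ S_i^k), where N(v) is the set of neighbors of v, is isomorphic to the complete bipartite star K_{1,ℓ} with center v: v is adjacent to each of the ℓ vertices of N(v) ∩ S_i^k, and these ℓ vertices are pairwise non-adjacent. -/

import Mathlib

/-!
A neighbour of `v` is `v` with positions `0` and `j` swapped, for some `j` with `v j ≠ v 0`; it lies
in `S_i` exactly when `v j = i`, and distinct such `j` give distinct neighbours, so `N(v) ∩ S_i` has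
as many elements as `v` has entries equal to `i`, namely `ℓ`. Every edge changes the entry at
position `0`, so `S_i` is independent, and `{v} ∪ (N(v) ∩ S_i)` induces a star.
-/

/-- A string of length `k*l` over the alphabet `Fin k` in which every symbol
occurs exactly `l` times (an `l`-set permutation). -/
def IsMSP (k l : ℕ) (v : Fin (k * l) → Fin k) : Prop :=
  ∀ a : Fin k, (Finset.univ.filter fun i => v i = a).card = l

/-- The vertex set of the star `l`-set transposition graph `ST_k^l`. -/
abbrev MSP (k l : ℕ) : Type := {v : Fin (k * l) → Fin k // IsMSP k l v}

/-- Star-transposition adjacency: `w` is obtained from `v` by transposing position `0`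
with a position `i ≠ 0` whose entry differs from that of position `0`. -/
def STAdj (k l : ℕ) (v w : Fin (k * l) → Fin k) : Prop :=
  ∃ i j : Fin (k * l), (j : ℕ) = 0 ∧ i ≠ j ∧ v i ≠ v j ∧ w = v ∘ Equiv.swap j i

/-- The star `l`-set transposition graph `ST_k^l`. -/
def STGraph (k l : ℕ) : SimpleGraph (MSP k l) :=
  SimpleGraph.fromRel fun v w => STAdj k l v.1 w.1

namespace SimpleGraph

variable {V α β : Type*} {G : SimpleGraph V} {s t : Set V}

open Classical in
noncomputable def completeBipartiteGraphIsoInduceUnion (hs : G.IsIndepSet s)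
    (ht : G.IsIndepSet t) (hst : G.IsCompleteBetween s t) (es : α ≃ s) (et : β ≃ t) :
    completeBipartiteGraph α β ≃g G.induce (s ∪ t) where
  toEquiv := (Equiv.sumCongr es et).trans (Equiv.Set.union hst.disjoint).symm
  map_rel_iff' := by
    rintro (a | b) (a' | b')
    · exact iff_of_false (fun h : G.Adj (es a) (es a') => hs (es a).2 (es a').2 h.ne h) (by simp)
    · exact iff_of_true (hst (es a).2 (et b').2) (by simp)
    · exact iff_of_true (hst (es a').2 (et b).2).symm (by simp)
    · exact iff_of_false (fun h : G.Adj (et b) (et b') => ht (et b).2 (et b').2 h.ne h) (by simp)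

end SimpleGraph

variable {k l : ℕ}

theorem IsMSP.comp_perm {v : Fin (k * l) → Fin k} (hv : IsMSP k l v)
    (σ : Equiv.Perm (Fin (k * l))) : IsMSP k l (v ∘ σ) :=
  fun a => (Finset.card_equiv σ (by simp)).trans (hv a)

def MSP.permute (v : MSP k l) (σ : Equiv.Perm (Fin (k * l))) : MSP k l :=
  ⟨v.1 ∘ σ, v.2.comp_perm σ⟩

section PositionZero

variable {z : Fin (k * l)}

theorem stAdj_iff (hz : (z : ℕ) = 0) {v w : Fin (k * l) → Fin k} :
    STAdj k l v w ↔ ∃ j, v j ≠ v z ∧ w = v ∘ Equiv.swap z j := by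
  constructor
  · rintro ⟨j, z', hz', -, hne, rfl⟩
    obtain rfl : z' = z := Fin.ext (hz'.trans hz.symm)
    exact ⟨j, hne, rfl⟩
  · rintro ⟨j, hne, rfl⟩
    exact ⟨j, z, hz, fun h => hne (h ▸ rfl), hne, rfl⟩

theorem STAdj.apply_ne (hz : (z : ℕ) = 0) {v w : Fin (k * l) → Fin k} (h : STAdj k l v w) :
    w z ≠ v z := by
  obtain ⟨j, hne, rfl⟩ := (stAdj_iff hz).mp h
  simpa using hne

theorem STAdj.symm {v w : Fin (k * l) → Fin k} (h : STAdj k l v w) : STAdj k l w v := by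
  obtain ⟨i, j, hj, hij, hne, rfl⟩ := h
  refine ⟨i, j, hj, hij, by simpa using hne.symm, ?_⟩
  ext m
  simp

theorem stGraph_adj_iff (hz : (z : ℕ) = 0) {v w : MSP k l} :
    (STGraph k l).Adj v w ↔ ∃ j, v.1 j ≠ v.1 z ∧ w.1 = v.1 ∘ Equiv.swap z j := by
  rw [STGraph, SimpleGraph.fromRel_adj, or_iff_left_of_imp STAdj.symm, ← stAdj_iff hz]
  exact and_iff_right_of_imp fun h hvw => h.apply_ne hz (by rw [hvw])

theorem isIndepSet_stGraph_fiber (hz : (z : ℕ) = 0) (i : Fin k) :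
    (STGraph k l).IsIndepSet {v | v.1 z = i} := by
  intro s hs t ht _ hst
  obtain ⟨j, hne, heq⟩ := (stGraph_adj_iff hz).mp hst
  exact hne (by simpa [heq] using ht.trans hs.symm)

theorem injOn_permute_swap (v : MSP k l) :
    Set.InjOn (fun j => v.permute (Equiv.swap z j)) {j | v.1 j ≠ v.1 z} := by
  intro j hj j' _ hjj'
  by_contra hne
  have hjz : j ≠ z := fun h => hj (h ▸ rfl)
  have := congrArg (fun w : MSP k l => w.1 j) hjj'
  simp [MSP.permute, Equiv.swap_apply_of_ne_of_ne hjz hne] at this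
  exact hj this.symm

theorem neighborSet_inter_fiber_eq_image (hz : (z : ℕ) = 0) {v : MSP k l} {i : Fin k}
    (hv : v.1 z ≠ i) :
    (STGraph k l).neighborSet v ∩ {w | w.1 z = i} =
      (fun j => v.permute (Equiv.swap z j)) '' {j | v.1 j = i} := by
  ext w
  simp only [Set.mem_inter_iff, SimpleGraph.mem_neighborSet, stGraph_adj_iff hz,
    Set.mem_ofPred_eq, Set.mem_image]
  constructor
  · rintro ⟨⟨j, -, heq⟩, hw⟩
    exact ⟨j, by simpa [heq] using hw, Subtype.ext heq.symm⟩
  · rintro ⟨j, hj, rfl⟩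
    exact ⟨⟨j, hj ▸ hv.symm, rfl⟩, by simpa [MSP.permute] using hj⟩

theorem ncard_neighborSet_inter_fiber (hz : (z : ℕ) = 0) {v : MSP k l} {i : Fin k}
    (hv : v.1 z ≠ i) : ((STGraph k l).neighborSet v ∩ {w | w.1 z = i}).ncard = l := by
  have hinj : Set.InjOn (fun j => v.permute (Equiv.swap z j)) {j | v.1 j = i} :=
    (injOn_permute_swap v).mono fun j (hj : v.1 j = i) => show v.1 j ≠ v.1 z from hj ▸ hv.symm
  rw [neighborSet_inter_fiber_eq_image hz hv, hinj.ncard_image]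
  simpa [Set.ncard_eq_toFinset_card'] using v.2 i

end PositionZero

/-- for `v ∉ S_i^k`, the subgraph induced on `{v} ∪ (N(v) ∩ S_i^k)` is a star
`K_{1,l}` with center `v`: `v` is adjacent to each of the `l` vertices of `N(v) ∩ S_i^k`,
and these are pairwise non-adjacent. -/
theorem stmt3 (k l : ℕ) (hk : 2 ≤ k) (hl : 1 ≤ l) (i : Fin k)
    (S : Set (MSP k l))
    (hS : S = {v : MSP k l | v.1 ⟨0, Nat.mul_pos (by omega) (by omega)⟩ = i}) :
    ∀ v : MSP k l, v ∉ S →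
      ((STGraph k l).neighborSet v ∩ S).ncard = l ∧
      (∀ s ∈ (STGraph k l).neighborSet v ∩ S, (STGraph k l).Adj v s) ∧
      (∀ s ∈ (STGraph k l).neighborSet v ∩ S, ∀ t ∈ (STGraph k l).neighborSet v ∩ S,
        s ≠ t → ¬ (STGraph k l).Adj s t) ∧
      ∃ e : completeBipartiteGraph (Fin 1) (Fin l) ≃g
          (STGraph k l).induce ({v} ∪ ((STGraph k l).neighborSet v ∩ S)),
        e (Sum.inl 0) = ⟨v, Set.mem_union_left _ rfl⟩ := by
  intro v hv
  subst hS
  set T := (STGraph k l).neighborSet v ∩ _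
  have hT : T.ncard = l := ncard_neighborSet_inter_fiber rfl hv
  have hT_indep : (STGraph k l).IsIndepSet T :=
    (isIndepSet_stGraph_fiber rfl i).mono Set.inter_subset_right
  have hvT : (STGraph k l).IsCompleteBetween {v} T := by
    rintro _ rfl w hw
    exact hw.1
  refine ⟨hT, fun s hs => hs.1, fun s hs t ht hst => hT_indep hs ht hst, ?_⟩
  have : Fintype T := Fintype.ofFinite T
  refine ⟨SimpleGraph.completeBipartiteGraphIsoInduceUnion (Set.pairwise_singleton v _) hT_indep hvT
    (Equiv.ofUnique _ _) (Fintype.equivFinOfCardEq ?_).symm, rfl⟩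
  rwa [← Set.toFinset_card, ← Set.ncard_eq_toFinset_card']
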